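/- Let w ∈ W_p be such that wsw⁻¹ ∈ W_{I,p}. Then |W_I| is even and the orbit of w·μ + pX under the dot action of W_I on X/pX has exactly |W_I|/2 elements; that is, N_I(w·μ) = |W_I|/2. -/

import Mathlib

noncomputable section

/-- The real vector space `X ⊗ ℝ`, where `X` is a free abelian group of rank `r`. -/
abbrev Vr (r : ℕ) := Fin r → ℝ

/-- The lattice `X` (identified with `ℤ^r`); its dual lattice `Y` is identified with
the same coordinate lattice via the standard perfect pairing. -/
abbrev Lr (r : ℕ) := Fin r → ℤ

/-- The embedding `X → X ⊗ ℝ`. -/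
def toV {r : ℕ} (x : Lr r) : Vr r := fun i => (x i : ℝ)

/-- The perfect pairing `⟨·,·⟩ : X × Y → ℤ`. -/
def pairZ {r : ℕ} (x y : Lr r) : ℤ := ∑ i, x i * y i

/-- The real extension of the pairing to `(X ⊗ ℝ) × Y → ℝ`. -/
def pairR {r : ℕ} (v : Vr r) (y : Lr r) : ℝ := ∑ i, v i * (y i : ℝ)

/-- The subgroup `ℤI` of `X` generated by a subset `I ⊆ X`. -/
def ZI {r : ℕ} (I : Finset (Lr r)) : AddSubgroup (Lr r) :=
  AddSubgroup.closure (I : Set (Lr r))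

/-- The data of a reduced crystallographic root system `Φ ⊆ X` with a fixed positive
system `Φ⁺`, simple roots `Φ_s`, coroots `α∨ ∈ Y`, a prime `p`, and the half-sum
`ρ ∈ X` of the positive roots. -/
structure ARDatum (r : ℕ) where
  Φ : Finset (Lr r)
  pos : Finset (Lr r)
  simples : Finset (Lr r)
  coroot : Lr r → Lr r
  p : ℕ
  ρ : Lr r
  hp : p.Prime
  root_ne_zero : ∀ α ∈ Φ, α ≠ 0
  pos_sub : pos ⊆ Φ
  simples_sub : simples ⊆ pos
  pos_or_neg : ∀ α ∈ Φ, α ∈ pos ∨ -α ∈ pos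
  not_pos_and_neg : ∀ α ∈ pos, -α ∉ pos
  neg_mem : ∀ α ∈ Φ, -α ∈ Φ
  root_coroot_two : ∀ α ∈ Φ, pairZ α (coroot α) = 2
  reflect_root_mem : ∀ α ∈ Φ, ∀ β ∈ Φ, β - pairZ β (coroot α) • α ∈ Φ
  reflect_coroot_mem : ∀ α ∈ Φ, ∀ β ∈ Φ,
    coroot β - pairZ α (coroot β) • coroot α ∈ coroot '' (Φ : Set (Lr r))
  reduced : ∀ α ∈ Φ, ∀ c : ℤ, c • α ∈ Φ → c = 1 ∨ c = -1
  pos_sum_simples : ∀ β ∈ pos, ∃ c : Lr r → ℕ, β = ∑ α ∈ simples, (c α : ℤ) • α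
  two_rho : (2 : ℤ) • ρ = ∑ α ∈ pos, α

namespace ARDatum

/-- The group of affine transformations of `X ⊗ ℝ`. -/
abbrev G (r : ℕ) := (Vr r) ≃ᵃ[ℝ] (Vr r)

variable {r : ℕ} (D : ARDatum r)

/-- `g` is the affine reflection `s_{α,mp} : v ↦ v − (⟨v,α∨⟩ − mp)·α`. -/
def IsRefl (α : Lr r) (m : ℤ) (g : G r) : Prop :=
  ∀ v : Vr r, g v = v - (pairR v (D.coroot α) - (m : ℝ) * (D.p : ℝ)) • toV α

/-- `g` is the linear reflection `s_α : v ↦ v − ⟨v,α∨⟩·α`. -/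
def IsLinRefl (α : Lr r) (g : G r) : Prop := D.IsRefl α 0 g

/-- `g` is the translation `t_{α,mp} : v ↦ v + mp·α`. -/
def IsTransl (α : Lr r) (m : ℤ) (g : G r) : Prop :=
  ∀ v : Vr r, g v = v + ((m : ℝ) * (D.p : ℝ)) • toV α

/-- The affine Weyl group `W_p`, generated by the `s_α` and the `t_{α,mp}`
for `α ∈ Φ⁺`, `m ∈ ℤ`. -/
def Wp : Subgroup (G r) :=
  Subgroup.closure ({g | ∃ α ∈ D.pos, D.IsLinRefl α g} ∪
    {g | ∃ α ∈ D.pos, ∃ m : ℤ, D.IsTransl α m g})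

/-- The finite Weyl group `W`, generated by the `s_α` for `α ∈ Φ⁺`. -/
def W : Subgroup (G r) :=
  Subgroup.closure {g | ∃ α ∈ D.pos, D.IsLinRefl α g}

/-- The subgroup `W_{I,p}` generated by the `s_α` and `t_{α,mp}` for `α ∈ I`. -/
def WIp (I : Finset (Lr r)) : Subgroup (G r) :=
  Subgroup.closure ({g | ∃ α ∈ I, D.IsLinRefl α g} ∪
    {g | ∃ α ∈ I, ∃ m : ℤ, D.IsTransl α m g})

/-- The subgroup `W_I` of `W` generated by the `s_α` for `α ∈ I`. -/
def WI (I : Finset (Lr r)) : Subgroup (G r) :=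
  Subgroup.closure {g | ∃ α ∈ I, D.IsLinRefl α g}

/-- `g` is a reflection (the reflections of `W_p` are exactly the `s_{α,mp}`). -/
def IsReflection (g : G r) : Prop := ∃ α ∈ D.pos, ∃ m : ℤ, D.IsRefl α m g

/-- The dot action `w·v := w(v+ρ) − ρ`. -/
def dot (g : G r) (v : Vr r) : Vr r := g (v + toV D.ρ) - toV D.ρ

/-- The hyperplane `H_{α,n} = {v : ⟨v+ρ,α∨⟩ = np}`. -/
def Hyp (α : Lr r) (n : ℤ) : Set (Vr r) :=
  {v | pairR (v + toV D.ρ) (D.coroot α) = (n : ℝ) * (D.p : ℝ)}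

/-- The complement of the union of all the hyperplanes `H_{α,n}`. -/
def Reg : Set (Vr r) :=
  {v | ∀ α ∈ D.pos, ∀ n : ℤ, pairR (v + toV D.ρ) (D.coroot α) ≠ (n : ℝ) * (D.p : ℝ)}

/-- The alcove containing `v` (the connected component of `v` in the complement of
the hyperplanes). -/
def alcoveOf (v : Vr r) : Set (Vr r) := connectedComponentIn D.Reg v

/-- `H_{α,n}` contains a wall of `A`, i.e. the interior of `closure A ∩ H_{α,n}`
inside the hyperplane `H_{α,n}` is nonempty. -/
def HasWall (A : Set (Vr r)) (α : Lr r) (n : ℤ) : Prop :=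
  ∃ x ∈ closure A ∩ D.Hyp α n, ∃ ε > 0,
    ∀ y ∈ D.Hyp α n, dist y x < ε → y ∈ closure A

/-- The fundamental alcove `C`. -/
def FundC : Set (Vr r) :=
  {v | ∀ α ∈ D.pos, 0 < pairR (v + toV D.ρ) (D.coroot α) ∧
    pairR (v + toV D.ρ) (D.coroot α) < (D.p : ℝ)}

/-- The closure `C̄` of the fundamental alcove. -/
def FundCBar : Set (Vr r) :=
  {v | ∀ α ∈ D.pos, 0 ≤ pairR (v + toV D.ρ) (D.coroot α) ∧
    pairR (v + toV D.ρ) (D.coroot α) ≤ (D.p : ℝ)}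

/-- The region `C_I`. -/
def CI (I : Finset (Lr r)) : Set (Vr r) :=
  {v | ∀ α ∈ D.pos, α ∈ ZI I → 0 < pairR (v + toV D.ρ) (D.coroot α) ∧
    pairR (v + toV D.ρ) (D.coroot α) < (D.p : ℝ)}

/-- The region `C̄_I`. -/
def CIBar (I : Finset (Lr r)) : Set (Vr r) :=
  {v | ∀ α ∈ D.pos, α ∈ ZI I → 0 ≤ pairR (v + toV D.ρ) (D.coroot α) ∧
    pairR (v + toV D.ρ) (D.coroot α) ≤ (D.p : ℝ)}

/-- `S_p`: the reflections of `W_p` in the walls of the fundamental alcove `C`. -/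
def Sp : Set (G r) :=
  {g | g ∈ D.Wp ∧ ∃ α ∈ D.pos, ∃ m : ℤ, D.IsRefl α m g ∧ D.HasWall D.FundC α m}

/-- One step of the order `⪯` (`↑`): `s_{α,mp}·u ⪯ u` whenever `⟨u+ρ,α∨⟩ ≥ mp`. -/
def UpStep (v u : Vr r) : Prop :=
  ∃ α ∈ D.pos, ∃ m : ℤ, (m : ℝ) * (D.p : ℝ) ≤ pairR (u + toV D.ρ) (D.coroot α) ∧
    v = u - (pairR (u + toV D.ρ) (D.coroot α) - (m : ℝ) * (D.p : ℝ)) • toV α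

/-- The order `⪯` (`↑`): the reflexive-transitive closure of `UpStep`. -/
def Up : Vr r → Vr r → Prop := Relation.ReflTransGen D.UpStep

/-- The strict order `≺`. -/
def Ups (v u : Vr r) : Prop := D.Up v u ∧ v ≠ u

/-- The order `≤`: `v ≤ u` iff `u − v` is a `ℤ≥0`-combination of the simple roots. -/
def Le (v u : Vr r) : Prop :=
  ∃ c : Lr r → ℕ, u - v = ∑ α ∈ D.simples, (c α : ℝ) • toV α

/-- The strict order `<`. -/
def Lt (v u : Vr r) : Prop := D.Le v u ∧ v ≠ u

/-- `X₊ = {ν ∈ X : ⟨ν+ρ,α∨⟩ ≥ 0 for all α ∈ Φ⁺}`, viewed inside `X ⊗ ℝ`. -/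
def XplusR : Set (Vr r) :=
  {v | (∃ ν : Lr r, toV ν = v) ∧ ∀ α ∈ D.pos, 0 ≤ pairR (v + toV D.ρ) (D.coroot α)}

/-- `n_α(v)`: the unique integer with `n_α(v)·p < ⟨v+ρ,α∨⟩ < (n_α(v)+1)·p`
(for `v` on none of the hyperplanes), realised as a floor. -/
def nfl (v : Vr r) (α : Lr r) : ℤ := ⌊pairR (v + toV D.ρ) (D.coroot α) / (D.p : ℝ)⌋

/-- `d(v) = ∑_{α ∈ Φ⁺} n_α(v)`. -/
def dfn (v : Vr r) : ℤ := ∑ α ∈ D.pos, D.nfl v α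

/-- The sublattice `pX` of `X`. -/
def pLat : AddSubgroup (Lr r) where
  carrier := {x | ∃ y : Lr r, x = (D.p : ℤ) • y}
  zero_mem' := ⟨0, by simp⟩
  add_mem' := by rintro a b ⟨y, rfl⟩ ⟨z, rfl⟩; exact ⟨y + z, (smul_add _ _ _).symm⟩
  neg_mem' := by rintro a ⟨y, rfl⟩; exact ⟨-y, (smul_neg _ _).symm⟩

/-- The orbit of `ν + pX` under the dot action of `W_I` on `X/pX`. -/
def dotOrbit (I : Finset (Lr r)) (ν : Lr r) : Set (Lr r ⧸ D.pLat) :=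
  {c | ∃ w ∈ D.WI I, ∃ ν' : Lr r, toV ν' = D.dot w (toV ν) ∧
    c = QuotientAddGroup.mk ν'}

end ARDatum

/-!
Write `ν = w·μ` and `σ = w s w⁻¹`. The stabiliser of `ν` in `W_p` is the conjugate `{1, σ}` of
that of `μ`. Since `W_{I,p} = pℤI ⋊ W_I`, we can write `σ = t_b u₀` with `b ∈ pℤI` and `u₀ ∈ W_I`;
then `u₀·ν ≡ ν` modulo `pX`, and `u₀ ≠ 1` because a non-trivial translation fixes no point.
Conversely, if `u·ν ≡ ν` modulo `pX` for some `u ∈ W_I`, the difference `u·ν - ν` lies in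
`ℤI ∩ pX = pℤI`, so a suitable `t_c u ∈ W_{I,p}` fixes `ν` and is therefore `1` or `σ`, whence
`u ∈ {1, u₀}`. So the stabiliser of `ν + pX` in `W_I` has exactly two elements, and the
orbit-stabiliser theorem gives `|W_I| = 2 N_I(ν)`.
-/

theorem MulAction.card_eq_two_mul_ncard_orbit {G X : Type*} [Group G] [MulAction G X] {x : X}
    {g : G} (hg : g ≠ 1) (hstab : ∀ h : G, h • x = x ↔ h = 1 ∨ h = g) :
    Nat.card G = 2 * (MulAction.orbit G x).ncard := by
  have hpair : (MulAction.stabilizer G x : Set G) = {1, g} := Set.ext hstab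
  rw [← (MulAction.stabilizer G x).index_mul_card, MulAction.index_stabilizer, mul_comm,
    ← SetLike.coe_sort_coe, Nat.card_coe_set_eq, hpair, Set.ncard_pair hg.symm]

abbrev QuotientAddGroup.mulActionOfCompatible {G M : Type*} [Monoid G] [AddGroup M]
    [MulAction G M] (N : AddSubgroup M)
    (h : ∀ (g : G) (x y : M), -x + y ∈ N → -(g • x) + g • y ∈ N) : MulAction G (M ⧸ N) where
  smul g := Quotient.map' (g • ·) fun x y hxy => by
    rw [QuotientAddGroup.leftRel_apply] at hxy ⊢
    exact h g x y hxy
  one_smul q := Quotient.inductionOn' q fun x => congrArg QuotientAddGroup.mk (one_smul G x)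
  mul_smul g g' q := Quotient.inductionOn' q fun x => congrArg QuotientAddGroup.mk (mul_smul g g' x)

namespace AffineEquiv

variable {k V : Type*} [Ring k] [AddCommGroup V] [Module k V]

theorem apply_eq_linear_of_map_zero (e : V ≃ᵃ[k] V) (h : e 0 = 0) (v : V) : e v = e.linear v := by
  simpa [h] using e.map_vadd 0 v

theorem constVAdd_add' (v w : V) : constVAdd k V (v + w) = constVAdd k V v * constVAdd k V w :=
  (constVAddHom k V).map_mul (.ofAdd v) (.ofAdd w)

theorem constVAdd_zero' : constVAdd k V 0 = 1 :=
  (constVAddHom k V).map_one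

theorem constVAdd_neg' (v : V) : constVAdd k V (-v) = (constVAdd k V v)⁻¹ :=
  (constVAddHom k V).map_inv (.ofAdd v)

theorem mul_constVAdd (e : V ≃ᵃ[k] V) (v : V) :
    e * constVAdd k V v = constVAdd k V (e.linear v) * e :=
  ext fun x => e.map_vadd x v

theorem eq_of_constVAdd_mul_eq {e e' : V ≃ᵃ[k] V} (he : e 0 = 0) (he' : e' 0 = 0) {v v' : V}
    (h : constVAdd k V v * e = constVAdd k V v' * e') : e = e' := by
  have hv : v = v' := by simpa [he, he'] using congr($h 0)
  subst hv
  exact mul_left_cancel h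

end AffineEquiv

section Lattice

variable {r : ℕ}

theorem toV_injective : Function.Injective (toV (r := r)) := fun _ _ h =>
  funext fun i => by simpa [toV] using congrFun h i

@[simp] theorem toV_zero : toV (0 : Lr r) = 0 := by ext; simp [toV]

@[simp] theorem toV_add (x y : Lr r) : toV (x + y) = toV x + toV y := by ext; simp [toV]

@[simp] theorem toV_neg (x : Lr r) : toV (-x) = -toV x := by ext; simp [toV]

@[simp] theorem toV_sub (x y : Lr r) : toV (x - y) = toV x - toV y := by ext; simp [toV]

@[simp] theorem toV_zsmul (n : ℤ) (x : Lr r) : toV (n • x) = (n : ℝ) • toV x := by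
  ext; simp [toV]

theorem pairR_toV (x y : Lr r) : pairR (toV x) y = pairZ x y := by simp [pairR, pairZ, toV]

theorem pairR_sub (v w : Vr r) (y : Lr r) : pairR (v - w) y = pairR v y - pairR w y := by
  simp [pairR, sub_mul, Finset.sum_sub_distrib]

theorem pairR_smul (c : ℝ) (v : Vr r) (y : Lr r) : pairR (c • v) y = c * pairR v y := by
  simp [pairR, Finset.mul_sum, mul_assoc]

end Lattice

namespace ARDatum

open AffineEquiv

variable {r : ℕ} {D : ARDatum r} {I : Finset (Lr r)}

theorem IsRefl.mul_self {α : Lr r} {m : ℤ} {g : G r} (hα : α ∈ D.Φ) (hg : D.IsRefl α m g) :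
    g * g = 1 := by
  ext v : 1
  rw [coe_mul, Function.comp_apply, hg, hg, pairR_sub, pairR_smul, pairR_toV,
    D.root_coroot_two α hα, coe_one, id]
  module

theorem IsRefl.ne_one {α : Lr r} {m : ℤ} {g : G r} (hα : α ∈ D.Φ) (hg : D.IsRefl α m g) :
    g ≠ 1 := by
  rintro rfl
  have h0 := hg 0
  have h1 := hg (toV α)
  rw [pairR_toV, D.root_coroot_two α hα, coe_one, id_eq] at h1
  simp only [coe_one, id_eq, pairR, Pi.zero_apply, zero_mul, Finset.sum_const_zero] at h0
  have h2 : (2 : ℝ) • toV α = 0 := by linear_combination (norm := module) h1 - h0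
  exact D.root_ne_zero α hα (toV_injective (by simpa using h2))

theorem WI_apply_zero {u : G r} (hu : u ∈ D.WI I) : u 0 = 0 := by
  induction hu using Subgroup.closure_induction with
  | mem g hg =>
    obtain ⟨α, -, hg⟩ := hg
    simp [hg 0, pairR]
  | one => rfl
  | mul g h _ _ hg hh => rw [coe_mul, Function.comp_apply, hh, hg]
  | inv g _ hg => rw [inv_def, symm_apply_eq, hg]

theorem IsLinRefl.apply_toV {α : Lr r} {g : G r} (hg : D.IsLinRefl α g) (x : Lr r) :
    g (toV x) = toV (x + -pairZ x (D.coroot α) • α) := by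
  rw [hg, pairR_toV, toV_add, toV_zsmul]
  push_cast
  module

theorem WI_apply_toV (hI : I ⊆ D.Φ) {u : G r} (hu : u ∈ D.WI I) (x : Lr r) :
    ∃ d ∈ ZI I, u (toV x) = toV (x + d) := by
  induction hu using Subgroup.closure_induction'' generalizing x with
  | mem g hg =>
    obtain ⟨α, hα, hg⟩ := hg
    exact ⟨_, zsmul_mem (AddSubgroup.subset_closure hα) _, hg.apply_toV x⟩
  | inv_mem g hg =>
    obtain ⟨α, hα, hg'⟩ := hg
    rw [inv_eq_of_mul_eq_one_right (hg'.mul_self (hI hα))]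
    exact ⟨_, zsmul_mem (AddSubgroup.subset_closure hα) _, hg'.apply_toV x⟩
  | one => exact ⟨0, zero_mem _, by simp⟩
  | mul g h _ _ hg hh =>
    obtain ⟨d, hd, hhx⟩ := hh x
    obtain ⟨d', hd', hgx⟩ := hg (x + d)
    exact ⟨d + d', add_mem hd hd', by rw [coe_mul, Function.comp_apply, hhx, hgx, add_assoc]⟩

theorem WI_apply_sub {u : G r} (hu : u ∈ D.WI I) (v v' : Vr r) :
    u v - u v' = u.linear (v - v') := by
  simp only [apply_eq_linear_of_map_zero u (WI_apply_zero hu), map_sub]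

variable (D I) in
def pZI : AddSubgroup (Vr r) where
  carrier := {b | ∃ y ∈ ZI I, toV ((D.p : ℤ) • y) = b}
  zero_mem' := ⟨0, zero_mem _, by simp⟩
  add_mem' := by
    rintro _ _ ⟨y, hy, rfl⟩ ⟨z, hz, rfl⟩
    exact ⟨y + z, add_mem hy hz, by simp only [smul_add, toV_add]⟩
  neg_mem' := by
    rintro _ ⟨y, hy, rfl⟩
    exact ⟨-y, (ZI I).neg_mem hy, by simp only [smul_neg, toV_neg]⟩

theorem WI_linear_toV_zsmul (hI : I ⊆ D.Φ) {u : G r} (hu : u ∈ D.WI I) (n : ℤ) (y : Lr r) :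
    ∃ d ∈ ZI I, u.linear (toV (n • y)) = toV (n • (y + d)) := by
  obtain ⟨d, hd, huy⟩ := WI_apply_toV hI hu y
  refine ⟨d, hd, ?_⟩
  rw [toV_zsmul, toV_zsmul, map_smul, ← apply_eq_linear_of_map_zero u (WI_apply_zero hu), huy]

theorem WI_linear_mem_pZI (hI : I ⊆ D.Φ) {u : G r} (hu : u ∈ D.WI I) {b : Vr r}
    (hb : b ∈ D.pZI I) : u.linear b ∈ D.pZI I := by
  obtain ⟨y, hy, rfl⟩ := hb
  obtain ⟨d, hd, huy⟩ := WI_linear_toV_zsmul hI hu (D.p : ℤ) y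
  exact ⟨y + d, add_mem hy hd, huy.symm⟩

theorem constVAdd_mem_WIp {b : Vr r} (hb : b ∈ D.pZI I) : constVAdd ℝ (Vr r) b ∈ D.WIp I := by
  obtain ⟨y, hy, rfl⟩ := hb
  induction hy using AddSubgroup.closure_induction with
  | mem α hα =>
    refine Subgroup.subset_closure (Or.inr ⟨α, hα, 1, fun v => ?_⟩)
    rw [constVAdd_apply, toV_zsmul, vadd_eq_add, add_comm]
    push_cast
    rw [one_mul]
  | zero =>
    rw [smul_zero, toV_zero, constVAdd_zero']
    exact one_mem _
  | add y z _ _ hy hz =>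
    rw [smul_add, toV_add, constVAdd_add']
    exact mul_mem hy hz
  | neg y _ hy =>
    rw [smul_neg, toV_neg, constVAdd_neg']
    exact inv_mem hy

theorem WI_le_WIp : D.WI I ≤ D.WIp I :=
  Subgroup.closure_mono Set.subset_union_left

theorem WIp_le_Wp (hI : I ⊆ D.pos) : D.WIp I ≤ D.Wp :=
  Subgroup.closure_mono <| Set.union_subset_union
    (fun _ ⟨α, hα, hg⟩ => ⟨α, hI hα, hg⟩) (fun _ ⟨α, hα, m, hg⟩ => ⟨α, hI hα, m, hg⟩)

theorem exists_constVAdd_mul_of_mem_WIp (hI : I ⊆ D.Φ) {g : G r} (hg : g ∈ D.WIp I) :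
    ∃ b ∈ D.pZI I, ∃ u ∈ D.WI I, g = constVAdd ℝ (Vr r) b * u := by
  induction hg using Subgroup.closure_induction with
  | mem g hg =>
    rcases hg with hg | ⟨α, hα, m, hg⟩
    · exact ⟨0, zero_mem _, g, Subgroup.subset_closure hg, by simp [one_def]⟩
    · refine ⟨_, ⟨m • α, zsmul_mem (AddSubgroup.subset_closure hα) m, rfl⟩, 1, one_mem _, ?_⟩
      ext v : 1
      rw [hg, mul_one, constVAdd_apply, vadd_eq_add, add_comm, toV_zsmul, toV_zsmul, smul_smul]
      push_cast
      ring_nf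
  | one => exact ⟨0, zero_mem _, 1, one_mem _, by simp [one_def]⟩
  | mul g h _ _ hg hh =>
    obtain ⟨a, ha, u, hu, rfl⟩ := hg
    obtain ⟨b, hb, u', hu', rfl⟩ := hh
    refine ⟨a + u.linear b, add_mem ha (WI_linear_mem_pZI hI hu hb), u * u', mul_mem hu hu', ?_⟩
    rw [constVAdd_add', mul_assoc, ← mul_assoc u, mul_constVAdd]
    group
  | inv g _ hg =>
    obtain ⟨a, ha, u, hu, rfl⟩ := hg
    refine ⟨u⁻¹.linear (-a), WI_linear_mem_pZI hI (inv_mem hu) ((D.pZI I).neg_mem ha),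
      u⁻¹, inv_mem hu, ?_⟩
    rw [← mul_constVAdd, constVAdd_neg', mul_inv_rev]

theorem dot_mul (g h : G r) (v : Vr r) : D.dot (g * h) v = D.dot g (D.dot h v) := by
  simp [dot]

theorem dot_one (v : Vr r) : D.dot 1 v = v := by
  simp [dot]

theorem dot_constVAdd_mul (a : Vr r) (g : G r) (v : Vr r) :
    D.dot (constVAdd ℝ (Vr r) a * g) v = D.dot g v + a := by
  simp only [dot, coe_mul, Function.comp_apply, constVAdd_apply, vadd_eq_add]
  abel

theorem dot_dot_eq_dot_iff (g w : G r) (v : Vr r) :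
    D.dot g (D.dot w v) = D.dot w v ↔ D.dot (w⁻¹ * g * w) v = v := by
  rw [dot_mul, dot_mul]
  constructor
  · intro h
    rw [h, ← dot_mul, inv_mul_cancel, dot_one]
  · intro h
    simpa [← dot_mul] using congrArg (D.dot w) h

theorem dot_stabilizer_conj {s w : G r} (hw : w ∈ D.Wp) {v : Vr r}
    (hv : ∀ g ∈ D.Wp, D.dot g v = v ↔ g = 1 ∨ g = s) :
    ∀ g ∈ D.Wp, D.dot g (D.dot w v) = D.dot w v ↔ g = 1 ∨ g = w * s * w⁻¹ := by
  intro g hg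
  have hconj (x : G r) : w⁻¹ * g * w = x ↔ g = w * x * w⁻¹ := by
    constructor <;> rintro rfl <;> group
  rw [dot_dot_eq_dot_iff, hv _ (mul_mem (mul_mem (inv_mem hw) hg) hw), hconj, hconj, mul_one,
    mul_inv_cancel]

theorem WI_dot_toV (hI : I ⊆ D.Φ) {u : G r} (hu : u ∈ D.WI I) (x : Lr r) :
    ∃ d ∈ ZI I, D.dot u (toV x) = toV (x + d) := by
  obtain ⟨d, hd, hu⟩ := WI_apply_toV hI hu (x + D.ρ)
  refine ⟨d, hd, ?_⟩
  rw [dot, ← toV_add, hu]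
  simp only [toV_add]
  abel

section DotAction

variable [Fact (I ⊆ D.Φ)]

instance : SMul (D.WI I) (Lr r) :=
  ⟨fun u x => x + (WI_dot_toV Fact.out u.2 x).choose⟩

theorem toV_smul (u : D.WI I) (x : Lr r) : toV (u • x) = D.dot u (toV x) :=
  (WI_dot_toV Fact.out u.2 x).choose_spec.2.symm

theorem neg_smul_add_mem_ZI (u : D.WI I) (x : Lr r) : -(u • x) + x ∈ ZI I := by
  obtain ⟨d, hd, hux⟩ := WI_dot_toV Fact.out u.2 x
  rw [show u • x = x + d from toV_injective (by rw [toV_smul, hux]), neg_add_rev,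
    neg_add_cancel_right]
  exact (ZI I).neg_mem hd

instance : MulAction (D.WI I) (Lr r) where
  one_smul x := toV_injective <| by rw [toV_smul]; exact dot_one _
  mul_smul u u' x := toV_injective <| by rw [toV_smul, toV_smul, toV_smul]; exact dot_mul _ _ _

instance : MulAction (D.WI I) (Lr r ⧸ D.pLat) :=
  QuotientAddGroup.mulActionOfCompatible D.pLat fun u x y ⟨z, hz⟩ => by
    obtain ⟨d, -, huz⟩ := WI_linear_toV_zsmul Fact.out u.2 (D.p : ℤ) z
    refine ⟨z + d, toV_injective ?_⟩
    rw [toV_add, toV_neg, toV_smul, toV_smul, neg_add_eq_sub, dot, dot, sub_sub_sub_cancel_right,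
      WI_apply_sub u.2, add_sub_add_right_eq_sub, ← toV_sub, sub_eq_neg_add, hz, huz]

theorem smul_mk (u : D.WI I) (x : Lr r) :
    u • (x : Lr r ⧸ D.pLat) = ((u • x : Lr r) : Lr r ⧸ D.pLat) :=
  rfl

theorem dotOrbit_eq_orbit (ν : Lr r) :
    D.dotOrbit I ν = MulAction.orbit (D.WI I) (ν : Lr r ⧸ D.pLat) := by
  ext c
  constructor
  · rintro ⟨u, hu, ν', hν', rfl⟩
    exact ⟨⟨u, hu⟩, congrArg _ (toV_injective (by rw [toV_smul, hν']))⟩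
  · rintro ⟨u, rfl⟩
    exact ⟨u, u.2, u • ν, toV_smul u ν, rfl⟩

theorem exists_stabilizer_eq_pair
    (hpXI : ∀ x ∈ ZI I, x ∈ D.pLat → ∃ y ∈ ZI I, x = (D.p : ℤ) • y)
    {ν : Lr r} {σ : G r} (hσ : σ ∈ D.WIp I) (hσ1 : σ ≠ 1)
    (hstab : ∀ g ∈ D.WIp I, D.dot g (toV ν) = toV ν ↔ g = 1 ∨ g = σ) :
    ∃ u₀ : D.WI I, u₀ ≠ 1 ∧ ∀ u : D.WI I, u • (ν : Lr r ⧸ D.pLat) = ν ↔ u = 1 ∨ u = u₀ := by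
  obtain ⟨_, ⟨y₀, -, rfl⟩, u₀, hu₀, rfl⟩ := exists_constVAdd_mul_of_mem_WIp Fact.out hσ
  have hfix : D.dot u₀ (toV ν) + toV ((D.p : ℤ) • y₀) = toV ν := by
    rw [← dot_constVAdd_mul]
    exact (hstab _ hσ).2 (Or.inr rfl)
  refine ⟨⟨u₀, hu₀⟩, fun h => hσ1 ?_, fun u => ?_⟩
  · obtain rfl : u₀ = 1 := congrArg Subtype.val h
    rw [dot_one, add_eq_left] at hfix
    rw [hfix, constVAdd_zero', mul_one]
  rw [smul_mk, QuotientAddGroup.eq]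
  constructor
  · intro h
    obtain ⟨y, hy, hyp⟩ := hpXI _ (neg_smul_add_mem_ZI u ν) h
    have hg : constVAdd ℝ (Vr r) (toV (-(u • ν) + ν)) * u ∈ D.WIp I :=
      mul_mem (constVAdd_mem_WIp ⟨y, hy, congrArg toV hyp.symm⟩) (WI_le_WIp u.2)
    have hgν : D.dot (constVAdd ℝ (Vr r) (toV (-(u • ν) + ν)) * u) (toV ν) = toV ν := by
      rw [dot_constVAdd_mul, ← toV_smul, ← toV_add, add_neg_cancel_left]
    rcases (hstab _ hg).1 hgν with h1 | hσ'
    · have h1' : constVAdd ℝ (Vr r) (toV (-(u • ν) + ν)) * u = constVAdd ℝ (Vr r) 0 * 1 := by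
        rw [h1, constVAdd_zero', mul_one]
      exact Or.inl (Subtype.ext (eq_of_constVAdd_mul_eq (WI_apply_zero u.2) rfl h1'))
    · exact Or.inr <| Subtype.ext <|
        eq_of_constVAdd_mul_eq (WI_apply_zero u.2) (WI_apply_zero hu₀) hσ'
  · rintro (rfl | rfl)
    · simp
    · refine ⟨y₀, toV_injective ?_⟩
      rw [toV_add, toV_neg, toV_smul, neg_add_eq_sub, sub_eq_iff_eq_add']
      exact hfix.symm

end DotAction

end ARDatum

theorem stmt3_general {r : ℕ} (D : ARDatum r)
    (I : Finset (Lr r)) (hI : I ⊆ D.simples)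
    (s : ARDatum.G r) (hs : s ∈ D.Sp)
    (mu : Lr r)
    (hmustab : ∀ g ∈ D.Wp, (D.dot g (toV mu) = toV mu ↔ g = 1 ∨ g = s))
    (hpXI : ∀ x : Lr r, (x ∈ D.pLat ∧ x ∈ ZI I) ↔ ∃ y ∈ ZI I, x = (D.p : ℤ) • y)
    (w : ARDatum.G r) (hw : w ∈ D.Wp)
    (hconj : w * s * w⁻¹ ∈ D.WIp I)
    (ν : Lr r) (hν : toV ν = D.dot w (toV mu)) :
    Even (Nat.card (D.WI I)) ∧ (D.dotOrbit I ν).ncard = Nat.card (D.WI I) / 2 := by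
  obtain ⟨-, α, hα, m, hsα, -⟩ := hs
  have hIpos : I ⊆ D.pos := hI.trans D.simples_sub
  have : Fact (I ⊆ D.Φ) := ⟨hIpos.trans D.pos_sub⟩
  have hσ1 : w * s * w⁻¹ ≠ 1 := by
    rw [Ne, conj_eq_one_iff]
    exact hsα.ne_one (D.pos_sub hα)
  have hstab : ∀ g ∈ D.WIp I, D.dot g (toV ν) = toV ν ↔ g = 1 ∨ g = w * s * w⁻¹ := fun g hg => by
    rw [hν]
    exact ARDatum.dot_stabilizer_conj hw hmustab g (ARDatum.WIp_le_Wp hIpos hg)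
  obtain ⟨u₀, hu₀, hstabI⟩ := ARDatum.exists_stabilizer_eq_pair
    (fun x hx hxp => (hpXI x).1 ⟨hxp, hx⟩) hconj hσ1 hstab
  have hcard := MulAction.card_eq_two_mul_ncard_orbit hu₀ hstabI
  rw [ARDatum.dotOrbit_eq_orbit]
  exact ⟨⟨_, hcard.trans (two_mul _)⟩, by omega⟩

/-- If `wsw⁻¹ ∈ W_{I,p}`, then `|W_I|` is even and the orbit of `w·μ + pX` under
the dot action of `W_I` on `X/pX` has exactly `|W_I|/2` elements. -/
theorem stmt3 {r : ℕ} (D : ARDatum r)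
    (I : Finset (Lr r)) (hI : I ⊆ D.simples)
    (s : ARDatum.G r) (hs : s ∈ D.Sp)
    (lam mu : Lr r) (hlam : toV lam ∈ D.FundC) (hmu : toV mu ∈ D.FundCBar)
    (hmustab : ∀ g ∈ D.Wp, (D.dot g (toV mu) = toV mu ↔ g = 1 ∨ g = s))
    (hlamstab : ∀ g ∈ D.Wp, D.dot g (toV lam) = toV lam → g = 1)
    (hpXI : ∀ x : Lr r, (x ∈ D.pLat ∧ x ∈ ZI I) ↔ ∃ y ∈ ZI I, x = (D.p : ℤ) • y)
    (w : ARDatum.G r) (hw : w ∈ D.Wp)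
    (hconj : w * s * w⁻¹ ∈ D.WIp I)
    (ν : Lr r) (hν : toV ν = D.dot w (toV mu)) :
    Even (Nat.card (D.WI I)) ∧ (D.dotOrbit I ν).ncard = Nat.card (D.WI I) / 2 :=
  stmt3_general D I hI s hs mu hmustab hpXI w hw hconj ν hν
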